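/- Let f satisfy Assumption A and ρ > 0, and let W, W₁, W₂, … be i.i.d. real random variables with E|W|^{1+ε} < ∞ for some ε > 0. Then, almost surely, sup_{p ∈ Δ_{n,ρ}} Σ_{i=1}^n p_i W_i → E[W] and inf_{p ∈ Δ_{n,ρ}} Σ_{i=1}^n p_i W_i → E[W] as n → ∞. -/

import Mathlib

open MeasureTheory ProbabilityTheory Filter Set

noncomputable section

/-- Assumption A: `f : ℝ → ℝ ∪ {+∞}` is lower semicontinuous, convex, equal to `+∞` on
negative reals, three times continuously differentiable on a neighborhood of `1`, with
`f 1 = f' 1 = 0` and `f'' 1 = 2`. -/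
structure IsDivergenceFn (f : ℝ → EReal) : Prop where
  lsc : LowerSemicontinuous f
  convex : ∀ x y a b : ℝ, 0 ≤ a → 0 ≤ b → a + b = 1 →
    f (a * x + b * y) ≤ (a : EReal) * f x + (b : EReal) * f y
  eq_top_of_neg : ∀ t : ℝ, t < 0 → f t = ⊤
  smooth : ∃ g : ℝ → ℝ, ∃ ε : ℝ, 0 < ε ∧
    (∀ t ∈ Set.Ioo (1 - ε) (1 + ε), f t = (g t : EReal)) ∧
    ContDiffOn ℝ 3 g (Set.Ioo (1 - ε) (1 + ε)) ∧
    g 1 = 0 ∧ deriv g 1 = 0 ∧ deriv (deriv g) 1 = 2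

/-- The empirical `f`-divergence ball `Δ_{n,ρ}`. -/
def simplexBall (f : ℝ → EReal) (n : ℕ) (ρ : ℝ) : Set (Fin n → ℝ) :=
  {p | (∀ i, 0 ≤ p i) ∧ ∑ i, p i = 1 ∧ ∑ i, f ((n : ℝ) * p i) ≤ (ρ : EReal)}

/-- Sample mean `z̄ = (1/n) ∑ z_i`. -/
def sampleMean {n : ℕ} (z : Fin n → ℝ) : ℝ := (∑ i, z i) / n

/-- Sample variance `s_n(z)² = (1/n) ∑ (z_i − z̄)²`. -/
def sampleVar {n : ℕ} (z : Fin n → ℝ) : ℝ := (∑ i, (z i - sampleMean z) ^ 2) / n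

/-- The Huber function `h_ε`. -/
def huber (ε t : ℝ) : ℝ := if |t| ≤ ε then t ^ 2 / 2 else ε * |t| - ε ^ 2 / 2

/-!
Assumption A makes `f` grow like `min ((t - 1)², |t - 1|)`: quadratically near `1` by the
second-derivative test, and at least linearly further out because `f` is convex with `f 1 = 0`.
Writing `u i = n p i - 1`, the constraint `∑ f (n p i) ≤ ρ` therefore bounds
`∑ min (u i², |u i|)`, and splitting the indices according to `|u i| ≤ 1` (Cauchy–Schwarz on one
part, `ℓ¹–ℓ^∞` on the other) gives `|∑ p i W i - W̄ₙ| ≤ (C √(∑ W i²) + C maxᵢ |W i|) / n`.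
The uniform weights lie in the ball, so the supremum and the infimum are squeezed around the sample
mean `W̄ₙ`. The strong law for `W` and for `|W|` gives `W̄ₙ → E W` and `|W n| / n → 0`, hence
`maxᵢ₍ᵢ<ₙ₎ |W i| / n → 0`, and `∑ W i² ≤ maxᵢ |W i| · ∑ |W i|` makes the other term vanish too.
-/

open scoped Topology

theorem eventually_add_mul_sq_le_of_deriv_deriv {g : ℝ → ℝ} {x₀ a : ℝ}
    (hg : ∀ᶠ x in 𝓝 x₀, DifferentiableAt ℝ g x) (hg' : DifferentiableAt ℝ (deriv g) x₀)
    (h₁ : deriv g x₀ = 0) (h₂ : 2 * a < deriv (deriv g) x₀) :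
    ∀ᶠ x in 𝓝 x₀, g x₀ + a * (x - x₀) ^ 2 ≤ g x := by
  set φ : ℝ → ℝ := fun x => g x - a * (x - x₀) ^ 2
  have hφ' : deriv φ =ᶠ[𝓝 x₀] fun x => deriv g x - 2 * a * (x - x₀) := by
    filter_upwards [hg] with x hx
    have := hx.hasDerivAt.sub ((((hasDerivAt_id x).sub_const x₀).pow 2).const_mul a)
    exact this.deriv.trans (by simp only [id]; ring)
  have hφ'' : deriv (deriv φ) x₀ = deriv (deriv g) x₀ - 2 * a := by
    rw [hφ'.deriv_eq]
    have := hg'.hasDerivAt.sub (((hasDerivAt_id x₀).sub_const x₀).const_mul (2 * a))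
    exact this.deriv.trans (by ring)
  have hmin : IsLocalMin φ x₀ := by
    refine isLocalMin_of_deriv_deriv_pos (by linarith) ?_
      (hg.self_of_nhds.continuousAt.sub (by fun_prop))
    rw [hφ'.eq_of_nhds, h₁]
    ring
  filter_upwards [hmin] with x hx
  simp only [φ, sub_self] at hx
  linarith

namespace IsDivergenceFn

variable {f : ℝ → EReal}

theorem apply_one (hf : IsDivergenceFn f) : f 1 = 0 := by
  obtain ⟨g, ε, hε, hfg, -, hg1, -⟩ := hf.smooth
  rw [hfg 1 ⟨by linarith, by linarith⟩, hg1]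
  rfl

theorem exists_sq_div_four_le (hf : IsDivergenceFn f) :
    ∃ δ, 0 < δ ∧ δ ≤ 1 ∧ ∀ t, |t - 1| ≤ δ → (((t - 1) ^ 2 / 4 : ℝ) : EReal) ≤ f t := by
  obtain ⟨g, ε, hε, hfg, hg, hg1, hg'1, hg''1⟩ := hf.smooth
  have hU : Ioo (1 - ε) (1 + ε) ∈ 𝓝 (1 : ℝ) := Ioo_mem_nhds (by linarith) (by linarith)
  have hdiff : ∀ x ∈ Ioo (1 - ε) (1 + ε), DifferentiableAt ℝ g x := fun x hx =>
    (hg.differentiableOn (by norm_num)).differentiableAt (isOpen_Ioo.mem_nhds hx)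
  have hdiff' : DifferentiableAt ℝ (deriv g) 1 :=
    ((hg.deriv_of_isOpen (m := 2) isOpen_Ioo (by norm_num)).differentiableOn
      (by norm_num)).differentiableAt hU
  have hquad := eventually_add_mul_sq_le_of_deriv_deriv (a := 1 / 4)
    (Filter.mem_of_superset hU hdiff) hdiff' hg'1 (by rw [hg''1]; norm_num)
  obtain ⟨r, hr, hball⟩ := Metric.eventually_nhds_iff.mp (hquad.and hU)
  refine ⟨min (r / 2) 1, by positivity, min_le_right _ _, fun t ht => ?_⟩
  have htr : dist t 1 < r := by
    rw [Real.dist_eq]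
    linarith [min_le_left (r / 2) 1]
  obtain ⟨hgt, htU⟩ := hball htr
  rw [hfg t htU, EReal.coe_le_coe_iff]
  linarith

theorem div_le_of_le_apply_one_add_mul (hf : IsDivergenceFn f) {θ a t : ℝ} (hθ : 0 < θ)
    (hθ1 : θ ≤ 1) (h : (a : EReal) ≤ f (1 + θ * (t - 1))) : ((a / θ : ℝ) : EReal) ≤ f t := by
  have hconv := hf.convex 1 t (1 - θ) θ (by linarith) hθ.le (by ring)
  rw [hf.apply_one, mul_zero, zero_add, show (1 - θ) * 1 + θ * t = 1 + θ * (t - 1) by ring]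
    at hconv
  have key : (a : EReal) ≤ θ * f t := h.trans hconv
  generalize f t = y at key ⊢
  induction y using EReal.rec with
  | bot => simp [EReal.coe_mul_bot_of_pos hθ] at key
  | coe r =>
    rw [← EReal.coe_mul, EReal.coe_le_coe_iff] at key
    exact EReal.coe_le_coe_iff.mpr ((div_le_iff₀' hθ).mpr key)
  | top => exact le_top

theorem exists_mul_min_le (hf : IsDivergenceFn f) :
    ∃ c, 0 < c ∧ ∀ t, ((c * min ((t - 1) ^ 2) |t - 1| : ℝ) : EReal) ≤ f t := by
  obtain ⟨δ, hδ, hδ1, hnear⟩ := hf.exists_sq_div_four_le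
  refine ⟨δ / 4, by positivity, fun t => ?_⟩
  by_cases ht : |t - 1| ≤ δ
  · refine le_trans (EReal.coe_le_coe_iff.mpr ?_) (hnear t ht)
    have := min_le_left ((t - 1) ^ 2) |t - 1|
    have := min_le_right ((t - 1) ^ 2) |t - 1|
    nlinarith [sq_nonneg (t - 1), abs_nonneg (t - 1)]
  · rw [not_le] at ht
    have hpos : 0 < |t - 1| := hδ.trans ht
    set θ := δ / |t - 1|
    have hθ : 0 < θ := by positivity
    have hθ1 : θ ≤ 1 := (div_le_one hpos).mpr ht.le
    have hfar := hnear (1 + θ * (t - 1)) (by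
      rw [add_sub_cancel_left, abs_mul, abs_of_pos hθ]
      exact (div_mul_cancel₀ _ hpos.ne').le)
    refine le_trans (EReal.coe_le_coe_iff.mpr ?_) (hf.div_le_of_le_apply_one_add_mul hθ hθ1 hfar)
    have hval : (1 + θ * (t - 1) - 1) ^ 2 / 4 / θ = δ / 4 * |t - 1| := by
      rw [add_sub_cancel_left, mul_pow, ← sq_abs (t - 1)]
      simp only [θ]
      field_simp
    rw [hval]
    exact mul_le_mul_of_nonneg_left (min_le_right _ _) (by positivity)

end IsDivergenceFn

theorem EReal.coe_finset_sum {ι : Type*} (s : Finset ι) (a : ι → ℝ) :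
    ((∑ i ∈ s, a i : ℝ) : EReal) = ∑ i ∈ s, (a i : EReal) :=
  map_sum (⟨⟨(↑), EReal.coe_zero⟩, EReal.coe_add⟩ : ℝ →+ EReal) a s

theorem abs_sum_mul_le_of_sum_min_sq_abs_le {ι : Type*} (s : Finset ι) {u v : ι → ℝ} {B K : ℝ}
    (hB : ∑ i ∈ s, min (u i ^ 2) |u i| ≤ B) (hK : ∀ i ∈ s, |v i| ≤ K) (hK0 : 0 ≤ K) :
    |∑ i ∈ s, u i * v i| ≤ √(B * ∑ i ∈ s, v i ^ 2) + B * K := by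
  set S := s.filter fun i => |u i| ≤ 1
  set L := s.filter fun i => ¬|u i| ≤ 1
  have hmin : ∀ i ∈ s, 0 ≤ min (u i ^ 2) |u i| := fun i _ => le_min (sq_nonneg _) (abs_nonneg _)
  have hsplit : ∑ i ∈ S, min (u i ^ 2) |u i| + ∑ i ∈ L, min (u i ^ 2) |u i| ≤ B := by
    rwa [Finset.sum_filter_add_sum_filter_not]
  have hS : ∑ i ∈ S, u i ^ 2 ≤ B := by
    have hL := Finset.sum_nonneg fun i (hi : i ∈ L) => hmin i (Finset.mem_filter.mp hi).1
    refine le_trans (le_of_eq (Finset.sum_congr rfl fun i hi => ?_)) (by linarith)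
    have hi := (Finset.mem_filter.mp hi).2
    rw [min_eq_left (by nlinarith [sq_abs (u i), abs_nonneg (u i)])]
  have hL : ∑ i ∈ L, |u i| ≤ B := by
    have hS := Finset.sum_nonneg fun i (hi : i ∈ S) => hmin i (Finset.mem_filter.mp hi).1
    refine le_trans (le_of_eq (Finset.sum_congr rfl fun i hi => ?_)) (by linarith)
    have hi := not_le.mp (Finset.mem_filter.mp hi).2
    rw [min_eq_right (by nlinarith [sq_abs (u i), abs_nonneg (u i)])]
  have hB0 : 0 ≤ B := (Finset.sum_nonneg hmin).trans hB
  have hsmall : |∑ i ∈ S, u i * v i| ≤ √(B * ∑ i ∈ s, v i ^ 2) := by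
    refine Real.abs_le_sqrt ((Finset.sum_mul_sq_le_sq_mul_sq S u v).trans ?_)
    exact mul_le_mul hS (Finset.sum_le_sum_of_subset_of_nonneg (Finset.filter_subset _ _)
      fun i _ _ => sq_nonneg _) (Finset.sum_nonneg fun i _ => sq_nonneg _) hB0
  have hlarge : |∑ i ∈ L, u i * v i| ≤ B * K :=
    calc |∑ i ∈ L, u i * v i| ≤ ∑ i ∈ L, |u i| * K := by
          refine (Finset.abs_sum_le_sum_abs _ _).trans (Finset.sum_le_sum fun i hi => ?_)
          rw [abs_mul]
          exact mul_le_mul_of_nonneg_left (hK i (Finset.mem_filter.mp hi).1) (abs_nonneg _)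
      _ ≤ B * K := by rw [← Finset.sum_mul]; exact mul_le_mul_of_nonneg_right hL hK0
  rw [← Finset.sum_filter_add_sum_filter_not s fun i => |u i| ≤ 1]
  exact (abs_add_le _ _).trans (add_le_add hsmall hlarge)

theorem sum_mul_sub_sampleMean_eq {n : ℕ} (hn : n ≠ 0) (p z : Fin n → ℝ) :
    ∑ i, p i * z i - sampleMean z = (∑ i, (n * p i - 1) * z i) / n := by
  have hn' : (n : ℝ) ≠ 0 := Nat.cast_ne_zero.mpr hn
  simp only [sampleMean, sub_mul, Finset.sum_sub_distrib, one_mul, mul_assoc, ← Finset.mul_sum]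
  field_simp

section SimplexBall

variable {f : ℝ → EReal} {n : ℕ} {ρ : ℝ} {p : Fin n → ℝ}

theorem sum_min_sq_abs_le_of_mem_simplexBall {c : ℝ} (hc : 0 < c)
    (hlb : ∀ t, ((c * min ((t - 1) ^ 2) |t - 1| : ℝ) : EReal) ≤ f t)
    (hp : p ∈ simplexBall f n ρ) :
    ∑ i, min ((n * p i - 1) ^ 2) |n * p i - 1| ≤ ρ / c := by
  rw [le_div_iff₀' hc, Finset.mul_sum, ← EReal.coe_le_coe_iff, EReal.coe_finset_sum]
  exact (Finset.sum_le_sum fun i _ => hlb _).trans hp.2.2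

theorem abs_sum_mul_sub_sampleMean_le {c : ℝ} (hc : 0 < c)
    (hlb : ∀ t, ((c * min ((t - 1) ^ 2) |t - 1| : ℝ) : EReal) ≤ f t)
    (hp : p ∈ simplexBall f n ρ) {z : Fin n → ℝ} {K : ℝ} (hK : ∀ i, |z i| ≤ K) (hK0 : 0 ≤ K) :
    |∑ i, p i * z i - sampleMean z| ≤ (√(ρ / c * ∑ i, z i ^ 2) + ρ / c * K) / n := by
  rcases eq_or_ne n 0 with rfl | hn
  · simp [sampleMean]
  rw [sum_mul_sub_sampleMean_eq hn, abs_div, Nat.abs_cast]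
  gcongr
  exact abs_sum_mul_le_of_sum_min_sq_abs_le _
    (sum_min_sq_abs_le_of_mem_simplexBall hc hlb hp) (fun i _ => hK i) hK0

theorem const_mem_simplexBall (hf : IsDivergenceFn f) (hn : n ≠ 0) (hρ : 0 ≤ ρ) :
    (fun _ => 1 / (n : ℝ)) ∈ simplexBall f n ρ := by
  have hn' : (n : ℝ) ≠ 0 := Nat.cast_ne_zero.mpr hn
  refine ⟨fun _ => by positivity, by simp [hn'], ?_⟩
  simp only [mul_one_div_cancel hn', hf.apply_one, Finset.sum_const_zero]
  exact EReal.coe_nonneg.mpr hρ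

end SimplexBall

theorem tendsto_div_of_tendsto_sum_range_div {x : ℕ → ℝ} {L : ℝ}
    (h : Tendsto (fun n : ℕ => (∑ i ∈ Finset.range n, x i) / n) atTop (𝓝 L)) :
    Tendsto (fun n : ℕ => x n / n) atTop (𝓝 0) := by
  have hshift : Tendsto (fun n : ℕ => (∑ i ∈ Finset.range (n + 1), x i) / (n + 1 : ℕ)) atTop
      (𝓝 L) :=
    h.comp (tendsto_add_atTop_nat 1)
  have hratio : Tendsto (fun n : ℕ => ((n + 1 : ℕ) : ℝ) / n) atTop (𝓝 1) := by
    have := tendsto_one_div_atTop_nhds_zero_nat.const_add (1 : ℝ)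
    rw [add_zero] at this
    refine this.congr' ((eventually_ne_atTop 0).mono fun n hn => ?_)
    have : (n : ℝ) ≠ 0 := Nat.cast_ne_zero.mpr hn
    push_cast
    field_simp
  have := (hshift.mul hratio).sub h
  rw [mul_one, sub_self] at this
  refine this.congr' ((eventually_ne_atTop 0).mono fun n hn => ?_)
  have : (n : ℝ) ≠ 0 := Nat.cast_ne_zero.mpr hn
  rw [Finset.sum_range_succ]
  push_cast
  field_simp
  ring

theorem tendsto_iSup_fin_div_of_tendsto_div {b : ℕ → ℝ} (hb : ∀ i, 0 ≤ b i)
    (h : Tendsto (fun n : ℕ => b n / n) atTop (𝓝 0)) :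
    Tendsto (fun n : ℕ => (⨆ i : Fin n, b i) / n) atTop (𝓝 0) := by
  refine tendsto_order.2 ⟨fun a ha => Eventually.of_forall fun n =>
    ha.trans_le (div_nonneg (Real.iSup_nonneg fun i => hb i) n.cast_nonneg), fun ε hε => ?_⟩
  obtain ⟨N, hN⟩ := eventually_atTop.1 ((tendsto_order.1 h).2 (ε / 2) (by positivity))
  set C := ∑ i ∈ Finset.range (N + 1), b i
  have hC0 : 0 ≤ C := Finset.sum_nonneg fun i _ => hb i
  have hC := (tendsto_order.1 (tendsto_const_div_atTop_nhds_zero_nat C)).2 (ε / 2) (by positivity)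
  filter_upwards [hC, eventually_gt_atTop 0] with n hCn hn
  have hn' : (0 : ℝ) < n := Nat.cast_pos.mpr hn
  have hbound : ⨆ i : Fin n, b i ≤ C + ε / 2 * n := by
    refine Real.iSup_le (fun i => ?_) (by positivity)
    rcases lt_or_ge (i : ℕ) (N + 1) with hi | hi
    · have := Finset.single_le_sum (fun j _ => hb j) (Finset.mem_range.mpr hi)
      nlinarith
    · have hi0 : (0 : ℝ) < (i : ℕ) := by norm_cast; omega
      have := (div_lt_iff₀ hi0).mp (hN i (by omega))
      have : ((i : ℕ) : ℝ) ≤ n := by exact_mod_cast i.2.le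
      nlinarith
  calc (⨆ i : Fin n, b i) / n ≤ (C + ε / 2 * n) / n := by gcongr
    _ = C / n + ε / 2 := by field_simp
    _ < ε := by linarith

theorem tendsto_sqrt_sum_sq_div {w : ℕ → ℝ} {m : ℝ}
    (hM : Tendsto (fun n : ℕ => (⨆ i : Fin n, |w i|) / n) atTop (𝓝 0))
    (h : Tendsto (fun n : ℕ => (∑ i ∈ Finset.range n, |w i|) / n) atTop (𝓝 m)) :
    Tendsto (fun n : ℕ => √(∑ i : Fin n, w i ^ 2) / n) atTop (𝓝 0) := by
  set M : ℕ → ℝ := fun n => ⨆ i : Fin n, |w i|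
  have hlim : Tendsto (fun n : ℕ => √(M n / n * ((∑ i ∈ Finset.range n, |w i|) / n)))
      atTop (𝓝 0) := by
    simpa using (hM.mul h).sqrt
  refine squeeze_zero (fun n => by positivity) (fun n => ?_) hlim
  have hsq : ∑ i : Fin n, w i ^ 2 ≤ M n * ∑ i ∈ Finset.range n, |w i| := by
    rw [← Fin.sum_univ_eq_sum_range (fun i => |w i|), Finset.mul_sum]
    refine Finset.sum_le_sum fun i _ => ?_
    rw [← sq_abs, sq]
    exact mul_le_mul_of_nonneg_right (le_ciSup (Finite.bddAbove_range fun j : Fin n => |w j|) i)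
      (abs_nonneg _)
  rw [← Real.sqrt_sq (Nat.cast_nonneg (α := ℝ) n), ← Real.sqrt_div' _ (sq_nonneg _)]
  gcongr
  rw [Real.sqrt_sq n.cast_nonneg, div_mul_div_comm, ← sq]
  gcongr

theorem tendsto_sSup_and_sInf_of_abs_sub_le {α : Type*} {l : Filter α} {S : α → Set ℝ}
    {x b : α → ℝ} {m : ℝ} (hx : Tendsto x l (𝓝 m)) (hb : Tendsto b l (𝓝 0))
    (hmem : ∀ᶠ a in l, x a ∈ S a) (hS : ∀ a, ∀ y ∈ S a, |y - x a| ≤ b a) :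
    Tendsto (fun a => sSup (S a)) l (𝓝 m) ∧ Tendsto (fun a => sInf (S a)) l (𝓝 m) := by
  have hlo : ∀ a, ∀ y ∈ S a, x a - b a ≤ y := fun a y hy => by
    linarith [(abs_le.mp (hS a y hy)).1]
  have hhi : ∀ a, ∀ y ∈ S a, y ≤ x a + b a := fun a y hy => by
    linarith [(abs_le.mp (hS a y hy)).2]
  constructor
  · refine tendsto_of_tendsto_of_tendsto_of_le_of_le' hx (by simpa using hx.add hb)
      (hmem.mono fun a ha => le_csSup ⟨_, hhi a⟩ ha)
      (hmem.mono fun a ha => csSup_le ⟨_, ha⟩ (hhi a))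
  · refine tendsto_of_tendsto_of_tendsto_of_le_of_le' (by simpa using hx.sub hb) hx
      (hmem.mono fun a ha => le_csInf ⟨_, ha⟩ (hlo a))
      (hmem.mono fun a ha => csInf_le ⟨_, hlo a⟩ ha)

theorem tendsto_sSup_and_sInf_image_simplexBall {f : ℝ → EReal} (hf : IsDivergenceFn f) {ρ : ℝ}
    (hρ : 0 ≤ ρ) {w : ℕ → ℝ} {m m' : ℝ}
    (hw : Tendsto (fun n : ℕ => (∑ i ∈ Finset.range n, w i) / n) atTop (𝓝 m))
    (hw' : Tendsto (fun n : ℕ => (∑ i ∈ Finset.range n, |w i|) / n) atTop (𝓝 m')) :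
    Tendsto (fun n : ℕ =>
        sSup ((fun p : Fin n → ℝ => ∑ i, p i * w i.1) '' simplexBall f n ρ)) atTop (𝓝 m) ∧
      Tendsto (fun n : ℕ =>
        sInf ((fun p : Fin n → ℝ => ∑ i, p i * w i.1) '' simplexBall f n ρ)) atTop (𝓝 m) := by
  obtain ⟨c, hc, hlb⟩ := hf.exists_mul_min_le
  set M : ℕ → ℝ := fun n => ⨆ i : Fin n, |w i|
  refine tendsto_sSup_and_sInf_of_abs_sub_le (x := fun n => sampleMean fun i : Fin n => w i)
    (b := fun n => (√(ρ / c * ∑ i : Fin n, w i ^ 2) + ρ / c * M n) / n) ?_ ?_ ?_ ?_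
  · simpa only [sampleMean, Fin.sum_univ_eq_sum_range] using hw
  · have hM := tendsto_iSup_fin_div_of_tendsto_div (fun i => abs_nonneg _)
      (tendsto_div_of_tendsto_sum_range_div hw')
    have := ((tendsto_sqrt_sum_sq_div hM hw').const_mul √(ρ / c)).add
      (hM.const_mul (ρ / c))
    simp only [mul_zero, add_zero] at this
    refine this.congr fun n => ?_
    rw [Real.sqrt_mul (by positivity)]
    ring
  · filter_upwards [eventually_ne_atTop 0] with n hn
    refine ⟨_, const_mem_simplexBall hf hn hρ, ?_⟩
    simp only [sampleMean, Finset.sum_div]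
    exact Finset.sum_congr rfl fun i _ => by ring
  · rintro n _ ⟨p, hp, rfl⟩
    exact abs_sum_mul_sub_sampleMean_le hc hlb hp
      (le_ciSup (Finite.bddAbove_range fun j : Fin n => |w j|))
      (Real.iSup_nonneg fun _ => abs_nonneg _)

theorem stmt19_general (f : ℝ → EReal) (hf : IsDivergenceFn f) (ρ : ℝ) (hρ : 0 < ρ)
    {Ω : Type*} [MeasurableSpace Ω] (μ : Measure Ω) [IsProbabilityMeasure μ]
    (W : ℕ → Ω → ℝ)
    (hindep : iIndepFun W μ)
    (hident : ∀ i, IdentDistrib (W i) (W 0) μ μ)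
    (ε : ℝ) (hε : 0 < ε)
    (hmom : Integrable (fun ω => |W 0 ω| ^ (1 + ε)) μ) :
    ∀ᵐ ω ∂μ,
      Tendsto (fun n : ℕ =>
          sSup ((fun p : Fin n → ℝ => ∑ i, p i * W i.1 ω) '' simplexBall f n ρ))
        atTop (nhds (∫ ω', W 0 ω' ∂μ)) ∧
      Tendsto (fun n : ℕ =>
          sInf ((fun p : Fin n → ℝ => ∑ i, p i * W i.1 ω) '' simplexBall f n ρ))
        atTop (nhds (∫ ω', W 0 ω' ∂μ)) := by
  have hW₀ := (hident 0).aemeasurable_fst.aestronglyMeasurable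
  have hint : Integrable (W 0) μ := by
    have := integrable_norm_rpow_of_le hW₀ zero_le_one (by linarith) (by linarith) hmom
    simpa only [Real.rpow_one, integrable_norm_iff hW₀] using this
  have hpair : Pairwise fun i j => IndepFun (W i) (W j) μ := fun i j hij => hindep.indepFun hij
  have hslln := strong_law_ae_real W hint hpair hident
  have hslln_abs := strong_law_ae_real (fun i ω => |W i ω|) hint.abs
    (fun i j hij => (hpair hij).comp measurable_abs measurable_abs)
    (fun i => (hident i).comp measurable_abs)
  filter_upwards [hslln, hslln_abs] with ω hω hω_abs
  exact tendsto_sSup_and_sInf_image_simplexBall (w := fun i => W i ω) hf hρ.le hω hω_abs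

theorem stmt19 (f : ℝ → EReal) (hf : IsDivergenceFn f) (ρ : ℝ) (hρ : 0 < ρ)
    {Ω : Type*} [MeasurableSpace Ω] (μ : Measure Ω) [IsProbabilityMeasure μ]
    (W : ℕ → Ω → ℝ) (hmeas : ∀ i, Measurable (W i))
    (hindep : iIndepFun W μ)
    (hident : ∀ i, IdentDistrib (W i) (W 0) μ μ)
    (ε : ℝ) (hε : 0 < ε)
    (hmom : Integrable (fun ω => |W 0 ω| ^ (1 + ε)) μ) :
    ∀ᵐ ω ∂μ,
      Tendsto (fun n : ℕ =>
          sSup ((fun p : Fin n → ℝ => ∑ i, p i * W i.1 ω) '' simplexBall f n ρ))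
        atTop (nhds (∫ ω', W 0 ω' ∂μ)) ∧
      Tendsto (fun n : ℕ =>
          sInf ((fun p : Fin n → ℝ => ∑ i, p i * W i.1 ω) '' simplexBall f n ρ))
        atTop (nhds (∫ ω', W 0 ω' ∂μ)) :=
  stmt19_general f hf ρ hρ μ W hindep hident ε hε hmom
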